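/- Let 𝔤 be a 4-dimensional unimodular real Lie algebra, equipped with an inner product, whose derived algebra 𝔤' = [𝔤,𝔤] is 3-dimensional and isomorphic to the 3-dimensional Heisenberg Lie algebra. Then 𝔤 has an orthonormal basis comprised of geodesic vectors. -/

import Mathlib

/-- An inner product on a real vector space, given as a positive-definite
symmetric bilinear form. -/
structure IsInnerProduct {L : Type*} [AddCommGroup L] [Module ℝ L]
    (B : L →ₗ[ℝ] L →ₗ[ℝ] ℝ) : Prop where
  symm : ∀ x y : L, B x y = B y x
  posdef : ∀ x : L, x ≠ 0 → 0 < B x x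

/-- `Y` is a geodesic vector: `Y ≠ 0` and `⟨[X,Y],Y⟩ = 0` for all `X`. -/
def IsGeodesicVector {L : Type*} [LieRing L] [LieAlgebra ℝ L]
    (B : L →ₗ[ℝ] L →ₗ[ℝ] ℝ) (Y : L) : Prop :=
  Y ≠ 0 ∧ ∀ X : L, B ⁅X, Y⁆ Y = 0

/-- A family of vectors is orthonormal with respect to the bilinear form `B`. -/
def IsOrthonormalFamily {L : Type*} [AddCommGroup L] [Module ℝ L]
    (B : L →ₗ[ℝ] L →ₗ[ℝ] ℝ) {ι : Type*} [DecidableEq ι] (v : ι → L) : Prop :=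
  ∀ i j, B (v i) (v j) = if i = j then 1 else 0

/-- A real Lie algebra is unimodular if every adjoint map is trace-free. -/
def IsUnimodularLie (L : Type*) [LieRing L] [LieAlgebra ℝ L] : Prop :=
  ∀ X : L, LinearMap.trace ℝ L (LieAlgebra.ad ℝ L X) = 0

/-!
Unimodularity forces `z` to be central: `ad w` preserves the Heisenberg algebra
`span {x, y, z}` and, being a derivation, acts on `z = ⁅x, y⁆` by the sum `a + d` of its diagonal
entries on `x` and `y`, so its trace is `2 (a + d)`.

Hence only the compression `A` of the bracket to the 3-dimensional space `V = z^⊥` matters.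
In three dimensions `A u v = M (u × v)` for a linear map `M`, and unimodularity says exactly that
`M` is symmetric (Milnor's frame). An orthonormal eigenbasis `f` of `M` then satisfies
`⟪A u f_i, f_i⟫ = ⟪u × f_i, M f_i⟫ = μ_i ⟪u × f_i, f_i⟫ = 0`, and together with `z / ‖z‖`
it is the required basis.
-/

open Module Submodule
open scoped RealInnerProductSpace Matrix

section ThreeDimensional

variable {V : Type*} [NormedAddCommGroup V] [InnerProductSpace ℝ V]

lemma LinearMap.isSymmetric_of_basis {ι : Type*} (b : Basis ι ℝ V) {T : V →ₗ[ℝ] V}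
    (h : ∀ i j, ⟪T (b i), b j⟫ = ⟪b i, T (b j)⟫) : T.IsSymmetric := by
  have := LinearMap.ext_basis (B := innerₗ V ∘ₗ T) (B' := (innerₗ V).compl₂ T) b b h
  exact fun x y => congr($this x y)

namespace OrthonormalBasis

variable (g : OrthonormalBasis (Fin 3) ℝ V)

noncomputable def cross : V →ₗ[ℝ] V →ₗ[ℝ] V :=
  (crossProduct.compl₁₂ (g.toBasis.equivFun : V →ₗ[ℝ] Fin 3 → ℝ)
    (g.toBasis.equivFun : V →ₗ[ℝ] Fin 3 → ℝ)).compr₂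
    (g.toBasis.equivFun.symm : (Fin 3 → ℝ) →ₗ[ℝ] V)

lemma inner_eq_dotProduct (u v : V) :
    ⟪u, v⟫ = g.toBasis.equivFun u ⬝ᵥ g.toBasis.equivFun v := by
  simp [← g.sum_inner_mul_inner u v, dotProduct, OrthonormalBasis.repr_apply_apply,
    real_inner_comm]

lemma inner_cross_self (u v : V) : ⟪g.cross u v, v⟫ = 0 := by
  rw [g.inner_eq_dotProduct, dotProduct_comm]
  simp [cross]

variable (A : V →ₗ[ℝ] V →ₗ[ℝ] V)

noncomputable def crossOperator : V →ₗ[ℝ] V :=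
  g.toBasis.constr ℝ fun l => A (g (l + 1)) (g (l + 2))

lemma crossOperator_cross (hA : A.IsAlt) (u v : V) :
    g.crossOperator A (g.cross u v) = A u v := by
  suffices g.cross.compr₂ (g.crossOperator A) = A from congr($this u v)
  refine LinearMap.ext_basis g.toBasis g.toBasis fun i j => ?_
  simp only [LinearMap.compr₂_apply, cross, LinearMap.compl₁₂_apply]
  fin_cases i <;> fin_cases j <;>
    simp [cross_apply, crossOperator, Fin.sum_univ_three, hA.self_eq_zero, hA.neg]

lemma isSymmetric_crossOperator (hA : A.IsAlt) (htr : ∀ u, LinearMap.trace ℝ V (A u) = 0) :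
    (g.crossOperator A).IsSymmetric := by
  have htrace k : ⟪g 0, A (g k) (g 0)⟫ + ⟪g 1, A (g k) (g 1)⟫ + ⟪g 2, A (g k) (g 2)⟫ = 0 := by
    rw [← htr, LinearMap.trace_eq_sum_inner _ g, Fin.sum_univ_three]
  have h0 := htrace 0
  have h1 := htrace 1
  have h2 := htrace 2
  refine LinearMap.isSymmetric_of_basis g.toBasis fun i j => ?_
  fin_cases i <;> fin_cases j <;>
    simp [crossOperator, ← hA.neg (g 0) (g 1), ← hA.neg (g 0) (g 2), ← hA.neg (g 1) (g 2),
      real_inner_comm (A _ _), hA.self_eq_zero] at h0 h1 h2 ⊢ <;> linarith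

end OrthonormalBasis

theorem exists_orthonormalBasis_inner_apply_self_eq_zero [FiniteDimensional ℝ V]
    (hV : finrank ℝ V = 3) {A : V →ₗ[ℝ] V →ₗ[ℝ] V} (hA : A.IsAlt)
    (htr : ∀ u, LinearMap.trace ℝ V (A u) = 0) :
    ∃ f : OrthonormalBasis (Fin 3) ℝ V, ∀ u i, ⟪A u (f i), f i⟫ = 0 := by
  let g := (stdOrthonormalBasis ℝ V).reindex (finCongr hV)
  have hM := g.isSymmetric_crossOperator A hA htr
  refine ⟨hM.eigenvectorBasis hV, fun u i => ?_⟩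
  rw [← g.crossOperator_cross A hA, hM, hM.apply_eigenvectorBasis, inner_smul_right,
    g.inner_cross_self, mul_zero]

end ThreeDimensional

section Compression

variable {E : Type*} [NormedAddCommGroup E] [InnerProductSpace ℝ E]
  (β : E →ₗ[ℝ] E →ₗ[ℝ] E) (K : Submodule ℝ E) [K.HasOrthogonalProjection]

noncomputable def LinearMap.compression : K →ₗ[ℝ] K →ₗ[ℝ] K :=
  (β.compl₁₂ K.subtype K.subtype).compr₂ K.orthogonalProjectionOnto.toLinearMap

lemma LinearMap.inner_compression_apply (u v w : K) :
    ⟪β.compression K u v, w⟫ = ⟪β u v, (w : E)⟫ := by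
  simp [compression]

lemma LinearMap.IsAlt.compression {β : E →ₗ[ℝ] E →ₗ[ℝ] E} (hβ : β.IsAlt) :
    (β.compression K).IsAlt := fun u => by
  simp [LinearMap.compression, hβ.self_eq_zero]

lemma LinearMap.trace_compression [FiniteDimensional ℝ E] (hK : ∀ u, ∀ w ∈ Kᗮ, β u w = 0)
    (u : K) : LinearMap.trace ℝ K (β.compression K u) = LinearMap.trace ℝ E (β u) := by
  change LinearMap.trace ℝ K (K.orthogonalProjectionOnto.toLinearMap ∘ₗ (β u ∘ₗ K.subtype)) = _
  rw [LinearMap.trace_comp_comm']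
  congr 1
  ext x
  have h := hK u _ (K.sub_starProjection_mem_orthogonal x)
  rw [map_sub, sub_eq_zero] at h
  exact h.symm

end Compression

lemma Orthonormal.fin_cons {E : Type*} [NormedAddCommGroup E] [InnerProductSpace ℝ E] {n : ℕ}
    {v : Fin n → E} (hv : Orthonormal ℝ v) {x : E} (hx : ‖x‖ = 1) (hxv : ∀ i, ⟪x, v i⟫ = 0) :
    Orthonormal ℝ (Fin.cons x v : Fin (n + 1) → E) := by
  refine ⟨Fin.cases hx hv.1, fun i j hij => ?_⟩
  cases i using Fin.cases <;> cases j using Fin.cases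
  · exact absurd rfl hij
  · simpa using hxv _
  · simpa [real_inner_comm] using hxv _
  · simpa using hv.2 (by simpa using hij)

theorem exists_orthonormalBasis_inner_apply_self_eq_zero_of_central {E : Type*}
    [NormedAddCommGroup E] [InnerProductSpace ℝ E] [FiniteDimensional ℝ E]
    (hE : finrank ℝ E = 4) {β : E →ₗ[ℝ] E →ₗ[ℝ] E} (hβ : β.IsAlt)
    (htr : ∀ u, LinearMap.trace ℝ E (β u) = 0) {z : E} (hz : z ≠ 0) (hz_cent : ∀ u, β u z = 0) :
    ∃ b : OrthonormalBasis (Fin 4) ℝ E, ∀ u i, ⟪β u (b i), b i⟫ = 0 := by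
  set K := (ℝ ∙ z)ᗮ
  have hK_perp : ∀ w ∈ Kᗮ, ∀ u, β u w = 0 ∧ β w u = 0 := by
    intro w hw u
    rw [orthogonal_orthogonal, mem_span_singleton] at hw
    obtain ⟨c, rfl⟩ := hw
    simp [hz_cent, ← hβ.neg]
  have hK : finrank ℝ K = 3 :=
    have : Fact (finrank ℝ E = 3 + 1) := ⟨hE⟩
    finrank_orthogonal_span_singleton hz
  obtain ⟨f, hf⟩ := exists_orthonormalBasis_inner_apply_self_eq_zero hK
    (hβ.compression K) fun u =>
      (β.trace_compression K (fun u w hw => (hK_perp w hw u).1) u).trans (htr u)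
  have hon : Orthonormal ℝ (Fin.cons (‖z‖⁻¹ • z) (fun i => (f i : E)) : Fin 4 → E) :=
    (f.orthonormal.comp_linearIsometry K.subtypeₗᵢ).fin_cons (norm_smul_inv_norm hz) fun i => by
      simp [real_inner_smul_left, mem_orthogonal_singleton_iff_inner_right.mp (f i).2]
  refine ⟨OrthonormalBasis.mk hon (hon.linearIndependent.span_eq_top_of_card_eq_finrank
    (by simp [hE])).ge, fun u i => ?_⟩
  rw [OrthonormalBasis.coe_mk]
  cases i using Fin.cases with
  | zero => simp [hz_cent]
  | succ i =>
    have h := (hK_perp _ (K.sub_starProjection_mem_orthogonal u) (f i)).2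
    rw [map_sub, LinearMap.sub_apply, sub_eq_zero] at h
    rw [Fin.cons_succ, h, K.starProjection_apply, ← β.inner_compression_apply K, hf]

noncomputable abbrev IsInnerProduct.toCore {L : Type*} [AddCommGroup L] [Module ℝ L]
    {B : L →ₗ[ℝ] L →ₗ[ℝ] ℝ} (hB : IsInnerProduct B) : InnerProductSpace.Core ℝ L where
  inner u v := B u v
  conj_inner_symm u v := by simpa using hB.symm v u
  re_inner_nonneg u := by
    rcases eq_or_ne u 0 with rfl | hu
    · simp
    · simpa using (hB.posdef u hu).le
  add_left u v w := by simp
  smul_left u v r := by simp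
  definite u hu := by_contra fun h => (hB.posdef u h).ne' hu

theorem exists_orthonormal_geodesic_basis_of_central {L : Type*} [LieRing L] [LieAlgebra ℝ L]
    [Module.Finite ℝ L] (hdim : finrank ℝ L = 4) (hU : IsUnimodularLie L)
    {B : L →ₗ[ℝ] L →ₗ[ℝ] ℝ} (hB : IsInnerProduct B) {z : L} (hz : z ≠ 0)
    (hz_cent : ∀ w : L, ⁅w, z⁆ = 0) :
    ∃ b : Basis (Fin 4) ℝ L, IsOrthonormalFamily B b ∧ ∀ i, IsGeodesicVector B (b i) := by
  let β : L →ₗ[ℝ] L →ₗ[ℝ] L := LieAlgebra.ad ℝ L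
  let _ : NormedAddCommGroup L := hB.toCore.toNormedAddCommGroup
  let _ : InnerProductSpace ℝ L := .ofCore hB.toCore.toCore
  obtain ⟨b, hb⟩ := exists_orthonormalBasis_inner_apply_self_eq_zero_of_central hdim
    (β := β) lie_self hU hz hz_cent
  refine ⟨b.toBasis, fun i j => ?_, fun i => ⟨b.orthonormal.ne_zero i, fun X => hb X i⟩⟩
  rw [b.coe_toBasis]
  exact orthonormal_iff_ite.mp b.orthonormal i j

theorem lie_eq_zero_of_lie_mem_span_heisenberg {L : Type*} [LieRing L] [LieAlgebra ℝ L]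
    [Module.Finite ℝ L] (hU : IsUnimodularLie L) {x y z : L}
    (hind : LinearIndependent ℝ ![x, y, z]) (hder : ∀ u v : L, ⁅u, v⁆ ∈ span ℝ {x, y, z})
    (hxy : ⁅x, y⁆ = z) (hxz : ⁅x, z⁆ = 0) (hyz : ⁅y, z⁆ = 0) (w : L) : ⁅w, z⁆ = 0 := by
  have hrange : Set.range ![x, y, z] = {x, y, z} := by
    ext
    simp [or_comm, or_left_comm, eq_comm]
  obtain ⟨a, b, p, hwx⟩ := mem_span_triple.mp (hder w x)
  obtain ⟨c, d, q, hwy⟩ := mem_span_triple.mp (hder w y)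
  have hwz : ⁅w, z⁆ = (a + d) • z := by
    rw [← hxy, leibniz_lie, ← hwx, ← hwy]
    simp only [add_lie, lie_add, smul_lie, lie_smul, hxy, hxz, lie_self, ← lie_skew z y, hyz,
      neg_zero]
    module
  let e := Basis.span hind
  have repr_eq (u : L) (hu : u ∈ span ℝ (Set.range ![x, y, z])) (α β γ : ℝ)
      (hv : α • x + β • y + γ • z = u) :
      e.repr ⟨u, hu⟩ = Finsupp.single 0 α + Finsupp.single 1 β + Finsupp.single 2 γ := by
    rw [show (⟨u, hu⟩ : span ℝ (Set.range ![x, y, z])) = α • e 0 + β • e 1 + γ • e 2 from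
      Subtype.ext (by simp [e, hv])]
    simp
  have htr := LinearMap.trace_restrict_eq_of_forall_mem (span ℝ (Set.range ![x, y, z]))
    (LieAlgebra.ad ℝ L w) (fun v => by rw [hrange]; exact hder w v)
  rw [hU w, LinearMap.trace_eq_matrix_trace ℝ e, Matrix.trace, Fin.sum_univ_three] at htr
  simp only [Matrix.diag_apply, LinearMap.toMatrix_apply, e, Basis.span_apply,
    LinearMap.restrict_apply, LieAlgebra.ad_apply, Matrix.cons_val_zero, Matrix.cons_val_one,
    Matrix.cons_val_two, Matrix.tail_cons, Matrix.head_cons] at htr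
  rw [repr_eq _ _ a b p hwx, repr_eq _ _ c d q hwy,
    repr_eq _ _ 0 0 (a + d) (by simp [hwz])] at htr
  have had : a + d = 0 := by simpa using htr
  rw [hwz, had, zero_smul]

theorem dim_four_heisenberg_derived_orthonormal_geodesic_basis_general
    {L : Type*} [LieRing L] [LieAlgebra ℝ L] [Module.Finite ℝ L]
    (hdim : Module.finrank ℝ L = 4) (hU : IsUnimodularLie L)
    (x y z : L)
    (hspan : (LieAlgebra.derivedSeries ℝ L 1 : Submodule ℝ L)
      = Submodule.span ℝ {x, y, z})
    (hind : LinearIndependent ℝ ![x, y, z])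
    (hxy : ⁅x, y⁆ = z) (hxz : ⁅x, z⁆ = 0) (hyz : ⁅y, z⁆ = 0)
    (B : L →ₗ[ℝ] L →ₗ[ℝ] ℝ) (hB : IsInnerProduct B) :
    ∃ b : Module.Basis (Fin 4) ℝ L,
      IsOrthonormalFamily B b ∧ ∀ i, IsGeodesicVector B (b i) := by
  have hder (u v : L) : ⁅u, v⁆ ∈ span ℝ {x, y, z} := by
    rw [← hspan, LieAlgebra.coe_derivedSeries_one_eq]
    exact subset_span ⟨u, v, rfl⟩
  have hz : z ≠ 0 := by simpa using hind.ne_zero 2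
  exact exists_orthonormal_geodesic_basis_of_central hdim hU hB hz
    (lie_eq_zero_of_lie_mem_span_heisenberg hU hind hder hxy hxz hyz)

/-- A 4-dimensional unimodular real Lie algebra with an inner product,
whose derived algebra is 3-dimensional and isomorphic to the Heisenberg Lie algebra
(i.e. has a basis `x, y, z` with `⁅x,y⁆ = z` and `z` central in it), has an
orthonormal basis comprised of geodesic vectors. -/
theorem dim_four_heisenberg_derived_orthonormal_geodesic_basis
    {L : Type*} [LieRing L] [LieAlgebra ℝ L] [Module.Finite ℝ L]
    (hdim : Module.finrank ℝ L = 4) (hU : IsUnimodularLie L)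
    (hdim' : Module.finrank ℝ (LieAlgebra.derivedSeries ℝ L 1) = 3)
    (x y z : L)
    (hspan : (LieAlgebra.derivedSeries ℝ L 1 : Submodule ℝ L)
      = Submodule.span ℝ {x, y, z})
    (hind : LinearIndependent ℝ ![x, y, z])
    (hxy : ⁅x, y⁆ = z) (hxz : ⁅x, z⁆ = 0) (hyz : ⁅y, z⁆ = 0)
    (B : L →ₗ[ℝ] L →ₗ[ℝ] ℝ) (hB : IsInnerProduct B) :
    ∃ b : Module.Basis (Fin 4) ℝ L,
      IsOrthonormalFamily B b ∧ ∀ i, IsGeodesicVector B (b i) :=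
  dim_four_heisenberg_derived_orthonormal_geodesic_basis_general hdim hU x y z hspan hind hxy hxz
    hyz B hB
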